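/- arXiv:2311.10223 — 8 statements merged into one kernel-verified Lean document; each statement's English description precedes it below -/
import Mathlib

section
/- Let μ ∈ ℝⁿ be a probability vector (nonnegative entries summing to 1), let P and P' be n×n column-stochastic real matrices, and let γ ∈ [0,1). Define the discounted state distributions d = (1 − γ)·(I − γP)^{-1}μ and d' = (1 − γ)·(I − γP')^{-1}μ. Then ∑_i |d_i − d'_i| ≤ (γ/(1 − γ)) · ∑_i |((P − P')d')_i|. -/
/-!
Write `d = d_γ(P, μ)` and `d' = d_γ(P', μ)`. Both solve `(1 - γ P) x = (1 - γ) μ` for their own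
matrix, so `(1 - γ P)(d - d') = γ (P - P') d'`. A column-stochastic `P` does not increase the
`ℓ¹` norm, hence `‖(1 - γ P) w‖₁ ≥ (1 - γ) ‖w‖₁`; applied to `w = d - d'` this is the bound.
The same inequality shows that `1 - γ P` is invertible, so the inverses in `d` and `d'` are
genuine ones.
-/

open Matrix

variable {R ι : Type*} [Field R] [LinearOrder R] [IsStrictOrderedRing R]
  [Fintype ι] [DecidableEq ι]

namespace Matrix

lemma sum_abs_mulVec_le_of_mem_colStochastic {B : Matrix ι ι R} (hB : B ∈ colStochastic R ι)
    (w : ι → R) : ∑ i, |(B *ᵥ w) i| ≤ ∑ i, |w i| :=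
  calc ∑ i, |(B *ᵥ w) i| ≤ ∑ i, ∑ j, B i j * |w j| := by
        gcongr with i
        calc |∑ j, B i j * w j| ≤ ∑ j, |B i j * w j| := Finset.abs_sum_le_sum_abs _ _
          _ = ∑ j, B i j * |w j| := by
            simp only [abs_mul, abs_of_nonneg (nonneg_of_mem_colStochastic hB)]
    _ = ∑ j, (∑ i, B i j) * |w j| := by
        rw [Finset.sum_comm]
        simp only [Finset.sum_mul]
    _ = ∑ j, |w j| := by simp only [sum_col_of_mem_colStochastic hB, one_mul]

lemma mul_sum_abs_le_sum_abs_one_sub_smul_mulVec {B : Matrix ι ι R}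
    (hB : B ∈ colStochastic R ι) {γ : R} (hγ : 0 ≤ γ) (w : ι → R) :
    (1 - γ) * ∑ i, |w i| ≤ ∑ i, |((1 - γ • B) *ᵥ w) i| := by
  have hBw : ∑ i, |(γ • B *ᵥ w) i| ≤ γ * ∑ i, |w i| := by
    simp only [Pi.smul_apply, smul_eq_mul, abs_mul, abs_of_nonneg hγ, ← Finset.mul_sum]
    exact mul_le_mul_of_nonneg_left (sum_abs_mulVec_le_of_mem_colStochastic hB w) hγ
  have hpointwise : ∀ i, |w i| - |(γ • B *ᵥ w) i| ≤ |((1 - γ • B) *ᵥ w) i| := fun i => by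
    rw [sub_mulVec, one_mulVec, smul_mulVec]
    exact abs_sub_abs_le_abs_sub _ _
  calc (1 - γ) * ∑ i, |w i| ≤ ∑ i, (|w i| - |(γ • B *ᵥ w) i|) := by
        rw [Finset.sum_sub_distrib]
        linarith
    _ ≤ ∑ i, |((1 - γ • B) *ᵥ w) i| := Finset.sum_le_sum fun i _ => hpointwise i

lemma isUnit_det_one_sub_smul_of_mem_colStochastic {B : Matrix ι ι R}
    (hB : B ∈ colStochastic R ι) {γ : R} (hγ0 : 0 ≤ γ) (hγ1 : γ < 1) :
    IsUnit (1 - γ • B).det := by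
  refine isUnit_iff_ne_zero.2 fun hdet => ?_
  obtain ⟨v, hv, hv0⟩ := exists_mulVec_eq_zero_iff.2 hdet
  have hpos : 0 < ∑ i, |v i| := by
    obtain ⟨i, hi⟩ := Function.ne_iff.1 hv
    exact Finset.sum_pos' (fun j _ => abs_nonneg _) ⟨i, Finset.mem_univ i, abs_pos.2 hi⟩
  have h := mul_sum_abs_le_sum_abs_one_sub_smul_mulVec hB hγ0 v
  simp only [hv0, Pi.zero_apply, abs_zero, Finset.sum_const_zero] at h
  nlinarith

end Matrix

noncomputable def discountedDist (γ : R) (P : Matrix ι ι R) (μ : ι → R) : ι → R :=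
  (1 - γ) • (1 - γ • P)⁻¹ *ᵥ μ

section discountedDist

variable {γ : R} {P P' : Matrix ι ι R}

lemma one_sub_smul_mulVec_discountedDist (hP : P ∈ colStochastic R ι) (hγ0 : 0 ≤ γ)
    (hγ1 : γ < 1) (μ : ι → R) :
    (1 - γ • P) *ᵥ discountedDist γ P μ = (1 - γ) • μ := by
  rw [discountedDist, mulVec_smul, mulVec_mulVec,
    mul_nonsing_inv _ (isUnit_det_one_sub_smul_of_mem_colStochastic hP hγ0 hγ1), one_mulVec]

lemma one_sub_smul_mulVec_sub_discountedDist (hP : P ∈ colStochastic R ι)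
    (hP' : P' ∈ colStochastic R ι) (hγ0 : 0 ≤ γ) (hγ1 : γ < 1) (μ : ι → R) :
    (1 - γ • P) *ᵥ (discountedDist γ P μ - discountedDist γ P' μ) =
      γ • (P - P') *ᵥ discountedDist γ P' μ := by
  have hsplit : 1 - γ • P = (1 - γ • P') - γ • (P - P') := by module
  rw [mulVec_sub, one_sub_smul_mulVec_discountedDist hP hγ0 hγ1, hsplit, sub_mulVec,
    one_sub_smul_mulVec_discountedDist hP' hγ0 hγ1, smul_mulVec]
  abel

end discountedDist

theorem discounted_distribution_l1_bound_general
    {n : ℕ} (μ : Fin n → ℝ)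
    (P P' : Matrix (Fin n) (Fin n) ℝ)
    (hPnonneg : ∀ i j, 0 ≤ P i j) (hPcol : ∀ j, ∑ i, P i j = 1)
    (hP'nonneg : ∀ i j, 0 ≤ P' i j) (hP'col : ∀ j, ∑ i, P' i j = 1)
    (γ : ℝ) (hγ0 : 0 ≤ γ) (hγ1 : γ < 1)
    (d d' : Fin n → ℝ)
    (hd : d = (1 - γ) • (1 - γ • P)⁻¹.mulVec μ)
    (hd' : d' = (1 - γ) • (1 - γ • P')⁻¹.mulVec μ) :
    ∑ i, |d i - d' i| ≤ (γ / (1 - γ)) * ∑ i, |(P - P').mulVec d' i| := by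
  have hP : P ∈ colStochastic ℝ (Fin n) := mem_colStochastic_iff_sum.2 ⟨hPnonneg, hPcol⟩
  have hP' : P' ∈ colStochastic ℝ (Fin n) := mem_colStochastic_iff_sum.2 ⟨hP'nonneg, hP'col⟩
  obtain rfl : d = discountedDist γ P μ := hd
  obtain rfl : d' = discountedDist γ P' μ := hd'
  have hbound := mul_sum_abs_le_sum_abs_one_sub_smul_mulVec hP hγ0
    (discountedDist γ P μ - discountedDist γ P' μ)
  simp only [one_sub_smul_mulVec_sub_discountedDist hP hP' hγ0 hγ1, Pi.smul_apply, Pi.sub_apply,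
    smul_eq_mul, abs_mul, abs_of_nonneg hγ0, ← Finset.mul_sum] at hbound
  rw [div_mul_eq_mul_div, le_div_iff₀ (by linarith)]
  linarith

theorem discounted_distribution_l1_bound
    {n : ℕ} (μ : Fin n → ℝ)
    (hμnonneg : ∀ i, 0 ≤ μ i) (hμsum : ∑ i, μ i = 1)
    (P P' : Matrix (Fin n) (Fin n) ℝ)
    (hPnonneg : ∀ i j, 0 ≤ P i j) (hPcol : ∀ j, ∑ i, P i j = 1)
    (hP'nonneg : ∀ i j, 0 ≤ P' i j) (hP'col : ∀ j, ∑ i, P' i j = 1)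
    (γ : ℝ) (hγ0 : 0 ≤ γ) (hγ1 : γ < 1)
    (d d' : Fin n → ℝ)
    (hd : d = (1 - γ) • (1 - γ • P)⁻¹.mulVec μ)
    (hd' : d' = (1 - γ) • (1 - γ • P')⁻¹.mulVec μ) :
    ∑ i, |d i - d' i| ≤ (γ / (1 - γ)) * ∑ i, |(P - P').mulVec d' i| :=
  discounted_distribution_l1_bound_general μ P P' hPnonneg hPcol hP'nonneg hP'col γ hγ0 hγ1 d d' hd
    hd'
end

section
/- Let μ ∈ ℝⁿ be a probability vector, let P and P' be n×n column-stochastic real matrices, let γ ∈ [0,1), and let f ∈ ℝⁿ satisfy |f_i| ≤ B for all i and some B ≥ 0. With d = (1 − γ)·(I − γP)^{-1}μ and d' = (1 − γ)·(I − γP')^{-1}μ, one has |∑_i d_i f_i − ∑_i d'_i f_i| ≤ B · (γ/(1 − γ)) · ∑_i |((P − P')d')_i|. -/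
/-!
Write `e = d - d'`. Both distributions solve `(1 - γP) x = (1 - γ) μ` (for `P` and `P'`
respectively), so `(1 - γP) e = γ (P - P') d'`. A substochastic `P` does not increase the
`ℓ¹` norm, hence `‖(1 - γP) e‖₁ ≥ (1 - γ) ‖e‖₁`, which bounds `‖e‖₁`; pairing `e` with `f`
costs at most a factor `B`. The same norm inequality shows that `1 - γP` is invertible.
-/

open Matrix

namespace Matrix

variable {ι : Type*} [Fintype ι]

theorem sum_abs_mulVec_le_of_substochastic (P : Matrix ι ι ℝ) (hP : ∀ i j, 0 ≤ P i j)
    (hcol : ∀ j, ∑ i, P i j ≤ 1) (v : ι → ℝ) :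
    ∑ i, |(P *ᵥ v) i| ≤ ∑ j, |v j| :=
  calc ∑ i, |(P *ᵥ v) i| ≤ ∑ i, ∑ j, |P i j * v j| :=
        Finset.sum_le_sum fun i _ => Finset.abs_sum_le_sum_abs _ _
    _ = ∑ j, (∑ i, P i j) * |v j| := by
        rw [Finset.sum_comm]
        simp only [abs_mul, abs_of_nonneg (hP _ _), Finset.sum_mul]
    _ ≤ ∑ j, |v j| :=
        Finset.sum_le_sum fun j _ => mul_le_of_le_one_left (abs_nonneg _) (hcol j)

variable [DecidableEq ι]

theorem mulVec_smul_nonsing_inv_mulVec {R : Type*} [CommRing R] {A : Matrix ι ι R}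
    (hA : IsUnit A.det) (c : R) (v : ι → R) : A *ᵥ (c • A⁻¹ *ᵥ v) = c • v := by
  rw [mulVec_smul, mulVec_mulVec, mul_nonsing_inv _ hA, one_mulVec]

theorem one_sub_mul_sum_abs_le_sum_abs_one_sub_smul_mulVec (P : Matrix ι ι ℝ)
    (hP : ∀ i j, 0 ≤ P i j) (hcol : ∀ j, ∑ i, P i j ≤ 1) {γ : ℝ} (hγ : 0 ≤ γ) (v : ι → ℝ) :
    (1 - γ) * ∑ i, |v i| ≤ ∑ i, |((1 - γ • P) *ᵥ v) i| := by
  have hv : ∀ i, |v i| ≤ γ * |(P *ᵥ v) i| + |((1 - γ • P) *ᵥ v) i| := fun i => by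
    have hsplit : v i = γ * (P *ᵥ v) i + ((1 - γ • P) *ᵥ v) i := by
      simp [sub_mulVec, smul_mulVec]
    calc |v i| = |γ * (P *ᵥ v) i + ((1 - γ • P) *ᵥ v) i| := congrArg abs hsplit
      _ ≤ |γ * (P *ᵥ v) i| + |((1 - γ • P) *ᵥ v) i| := abs_add_le _ _
      _ = γ * |(P *ᵥ v) i| + |((1 - γ • P) *ᵥ v) i| := by rw [abs_mul, abs_of_nonneg hγ]
  have hsum : ∑ i, |v i| ≤ ∑ i, (γ * |(P *ᵥ v) i| + |((1 - γ • P) *ᵥ v) i|) :=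
    Finset.sum_le_sum fun i _ => hv i
  rw [Finset.sum_add_distrib, ← Finset.mul_sum] at hsum
  linarith [mul_le_mul_of_nonneg_left (sum_abs_mulVec_le_of_substochastic P hP hcol v) hγ]

theorem isUnit_det_one_sub_smul_of_substochastic (P : Matrix ι ι ℝ)
    (hP : ∀ i j, 0 ≤ P i j) (hcol : ∀ j, ∑ i, P i j ≤ 1) {γ : ℝ} (hγ0 : 0 ≤ γ) (hγ1 : γ < 1) :
    IsUnit (1 - γ • P).det := by
  rw [isUnit_iff_ne_zero]
  intro hdet
  obtain ⟨v, hv, hker⟩ := exists_mulVec_eq_zero_iff.mpr hdet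
  have hbound := one_sub_mul_sum_abs_le_sum_abs_one_sub_smul_mulVec P hP hcol hγ0 v
  simp only [hker, Pi.zero_apply, abs_zero, Finset.sum_const_zero] at hbound
  have hnorm : ∑ i, |v i| = 0 :=
    le_antisymm (nonpos_of_mul_nonpos_right hbound (by linarith))
      (Finset.sum_nonneg fun i _ => abs_nonneg _)
  exact hv (funext fun i => abs_eq_zero.mp
    ((Finset.sum_eq_zero_iff_of_nonneg fun i _ => abs_nonneg (v i)).mp hnorm i
      (Finset.mem_univ i)))

end Matrix

theorem abs_sum_mul_le_sum_abs_mul {ι : Type*} [Fintype ι] (e f : ι → ℝ) {B : ℝ}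
    (hf : ∀ i, |f i| ≤ B) : |∑ i, e i * f i| ≤ (∑ i, |e i|) * B :=
  calc |∑ i, e i * f i| ≤ ∑ i, |e i| * |f i| := by
        simpa only [abs_mul] using Finset.abs_sum_le_sum_abs (fun i => e i * f i) Finset.univ
    _ ≤ (∑ i, |e i|) * B := by
        rw [Finset.sum_mul]
        exact Finset.sum_le_sum fun i _ => mul_le_mul_of_nonneg_left (hf i) (abs_nonneg _)

theorem discounted_distribution_expectation_bound_general
    {n : ℕ} (μ : Fin n → ℝ)
    (P P' : Matrix (Fin n) (Fin n) ℝ)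
    (hPnonneg : ∀ i j, 0 ≤ P i j) (hPcol : ∀ j, ∑ i, P i j = 1)
    (hP'nonneg : ∀ i j, 0 ≤ P' i j) (hP'col : ∀ j, ∑ i, P' i j = 1)
    (γ : ℝ) (hγ0 : 0 ≤ γ) (hγ1 : γ < 1)
    (f : Fin n → ℝ) (B : ℝ) (hB : 0 ≤ B) (hf : ∀ i, |f i| ≤ B)
    (d d' : Fin n → ℝ)
    (hd : d = (1 - γ) • (1 - γ • P)⁻¹.mulVec μ)
    (hd' : d' = (1 - γ) • (1 - γ • P')⁻¹.mulVec μ) :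
    |∑ i, d i * f i - ∑ i, d' i * f i|
      ≤ B * ((γ / (1 - γ)) * ∑ i, |(P - P').mulVec d' i|) := by
  have hPd : (1 - γ • P) *ᵥ d = (1 - γ) • μ := hd ▸ mulVec_smul_nonsing_inv_mulVec
    (isUnit_det_one_sub_smul_of_substochastic P hPnonneg (fun j => (hPcol j).le) hγ0 hγ1) _ μ
  have hP'd' : (1 - γ • P') *ᵥ d' = (1 - γ) • μ := hd' ▸ mulVec_smul_nonsing_inv_mulVec
    (isUnit_det_one_sub_smul_of_substochastic P' hP'nonneg (fun j => (hP'col j).le) hγ0 hγ1) _ μ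
  have hdiff : (1 - γ • P) *ᵥ (d - d') = γ • (P - P') *ᵥ d' := by
    rw [mulVec_sub, hPd, ← hP'd']
    simp only [sub_mulVec, smul_mulVec, one_mulVec, smul_sub]
    abel
  have hl1 : ∑ i, |(d - d') i| ≤ γ / (1 - γ) * ∑ i, |((P - P') *ᵥ d') i| := by
    have := one_sub_mul_sum_abs_le_sum_abs_one_sub_smul_mulVec P hPnonneg
      (fun j => (hPcol j).le) hγ0 (d - d')
    simp only [hdiff, Pi.smul_apply, smul_eq_mul, abs_mul, abs_of_nonneg hγ0,
      ← Finset.mul_sum] at this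
    rw [div_mul_eq_mul_div, le_div_iff₀ (sub_pos.mpr hγ1)]
    linarith
  calc |∑ i, d i * f i - ∑ i, d' i * f i| = |∑ i, (d - d') i * f i| := by
        simp only [Pi.sub_apply, sub_mul, Finset.sum_sub_distrib]
    _ ≤ (∑ i, |(d - d') i|) * B := abs_sum_mul_le_sum_abs_mul _ _ hf
    _ ≤ (γ / (1 - γ) * ∑ i, |((P - P') *ᵥ d') i|) * B := mul_le_mul_of_nonneg_right hl1 hB
    _ = B * (γ / (1 - γ) * ∑ i, |((P - P') *ᵥ d') i|) := mul_comm _ _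

theorem discounted_distribution_expectation_bound
    {n : ℕ} (μ : Fin n → ℝ)
    (hμnonneg : ∀ i, 0 ≤ μ i) (hμsum : ∑ i, μ i = 1)
    (P P' : Matrix (Fin n) (Fin n) ℝ)
    (hPnonneg : ∀ i j, 0 ≤ P i j) (hPcol : ∀ j, ∑ i, P i j = 1)
    (hP'nonneg : ∀ i j, 0 ≤ P' i j) (hP'col : ∀ j, ∑ i, P' i j = 1)
    (γ : ℝ) (hγ0 : 0 ≤ γ) (hγ1 : γ < 1)
    (f : Fin n → ℝ) (B : ℝ) (hB : 0 ≤ B) (hf : ∀ i, |f i| ≤ B)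
    (d d' : Fin n → ℝ)
    (hd : d = (1 - γ) • (1 - γ • P)⁻¹.mulVec μ)
    (hd' : d' = (1 - γ) • (1 - γ • P')⁻¹.mulVec μ) :
    |∑ i, d i * f i - ∑ i, d' i * f i|
      ≤ B * ((γ / (1 - γ)) * ∑ i, |(P - P').mulVec d' i|) :=
  discounted_distribution_expectation_bound_general μ P P' hPnonneg hPcol hP'nonneg hP'col γ hγ0 hγ1
    f B hB hf d d' hd hd'
end

section
/- Let P and P' be n×n column-stochastic real matrices, let γ ∈ [0,1), and let μ ∈ ℝⁿ be a probability vector. Suppose there exist a k-column environment structure: for each index s ∈ {1,…,n}, an n×k column-stochastic matrix T_s and probability vectors π_s, π'_s ∈ ℝᵏ such that the s-th column of P equals T_s π_s and the s-th column of P' equals T_s π'_s. With d' = (1 − γ)·(I − γP')^{-1}μ and d = (1 − γ)·(I − γP)^{-1}μ, one has ∑_i |d_i − d'_i| ≤ (γ/(1 − γ)) · ∑_s d'_s · (∑_a |(π_s)_a − (π'_s)_a|). -/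
/-!
Both discounted distributions are fixed points, `d = γ P d + (1 - γ) μ` and
`d' = γ P' d' + (1 - γ) μ`, so their difference satisfies
`d - d' = γ P (d - d') + γ (P - P') d'`. Column-stochastic matrices are `ℓ¹` contractions, hence
`‖d - d'‖₁ ≤ γ ‖d - d'‖₁ + γ ‖(P - P') d'‖₁`. Finally the `s`-th column of `P - P'` is
`T_s (π_s - π'_s)`, whose `ℓ¹` norm is at most `‖π_s - π'_s‖₁` by the same contraction, and
`d' ≥ 0` lets these column bounds be weighted by `d'_s`.
-/

open Finset Matrix

section Rectangular

variable {m n : Type*} [Fintype m] [Fintype n]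

theorem sum_abs_mulVec_le (A : Matrix m n ℝ) (x : n → ℝ) :
    ∑ i, |(A *ᵥ x) i| ≤ ∑ j, |x j| * ∑ i, |A i j| :=
  calc ∑ i, |(A *ᵥ x) i| ≤ ∑ i, ∑ j, |A i j| * |x j| :=
        sum_le_sum fun i _ => (abs_sum_le_sum_abs _ _).trans_eq (by simp only [abs_mul])
    _ = ∑ j, |x j| * ∑ i, |A i j| := by
        rw [sum_comm]; simp only [mul_sum, mul_comm]

theorem sum_abs_mulVec_le_of_nonneg_of_sum_le_one {A : Matrix m n ℝ} (hA : ∀ i j, 0 ≤ A i j)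
    (hcol : ∀ j, ∑ i, A i j ≤ 1) (x : n → ℝ) : ∑ i, |(A *ᵥ x) i| ≤ ∑ j, |x j| :=
  (sum_abs_mulVec_le A x).trans <| sum_le_sum fun j _ =>
    mul_le_of_le_one_right (abs_nonneg _) (by simpa only [abs_of_nonneg (hA _ j)] using hcol j)

end Rectangular

section ColStochastic

variable {n : Type*} [Fintype n] [DecidableEq n] {P : Matrix n n ℝ} {γ : ℝ}

theorem sum_abs_smul_mulVec_le_of_mem_colStochastic (hP : P ∈ colStochastic ℝ n)
    (x : n → ℝ) : ∑ i, |(γ • P *ᵥ x) i| ≤ |γ| * ∑ i, |x i| := by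
  simp only [Pi.smul_apply, smul_eq_mul, abs_mul, ← mul_sum]
  exact mul_le_mul_of_nonneg_left (sum_abs_mulVec_le_of_nonneg_of_sum_le_one
    (fun _ _ => nonneg_of_mem_colStochastic hP) (fun j => (sum_col_of_mem_colStochastic hP j).le) x)
    (abs_nonneg γ)

theorem isUnit_det_one_sub_smul_of_mem_colStochastic (hP : P ∈ colStochastic ℝ n)
    (hγ : |γ| < 1) : IsUnit (1 - γ • P).det := by
  rw [isUnit_iff_ne_zero, Ne, ← exists_mulVec_eq_zero_iff]
  rintro ⟨v, hv0, hv⟩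
  have hfix : v = γ • P *ᵥ v := by
    rwa [sub_mulVec, one_mulVec, smul_mulVec, sub_eq_zero] at hv
  have hle : ∑ i, |v i| ≤ |γ| * ∑ i, |v i| := by
    conv_lhs => rw [hfix]
    exact sum_abs_smul_mulVec_le_of_mem_colStochastic hP v
  have hzero : ∑ i, |v i| = 0 := by
    nlinarith [sum_nonneg fun i (_ : i ∈ univ) => abs_nonneg (v i)]
  rw [sum_eq_zero_iff_of_nonneg fun i _ => abs_nonneg (v i)] at hzero
  exact hv0 (funext fun i => abs_eq_zero.1 (hzero i (mem_univ i)))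

theorem eq_smul_mulVec_add_of_eq_smul_inv_mulVec {c : ℝ} {d μ : n → ℝ}
    (h : IsUnit (1 - γ • P).det) (hd : d = c • (1 - γ • P)⁻¹ *ᵥ μ) :
    d = γ • P *ᵥ d + c • μ := by
  have hsol : (1 - γ • P) *ᵥ d = c • μ := by
    rw [hd, mulVec_smul, mulVec_mulVec, mul_nonsing_inv _ h, one_mulVec]
  rw [sub_mulVec, one_mulVec, smul_mulVec] at hsol
  rw [← hsol, add_sub_cancel]

/-- Summing the fixed-point equation shows that `x` and `|x|` have the same total mass. -/
theorem nonneg_of_eq_smul_mulVec_add (hP : P ∈ colStochastic ℝ n) (hγ0 : 0 ≤ γ) (hγ1 : γ < 1)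
    {x b : n → ℝ} (hb : ∀ i, 0 ≤ b i) (hx : x = γ • P *ᵥ x + b) : ∀ i, 0 ≤ x i := by
  have hmass : ∑ i, x i = γ * ∑ i, x i + ∑ i, b i := by
    conv_lhs => rw [hx]
    simp only [Pi.add_apply, Pi.smul_apply, smul_eq_mul, sum_add_distrib, ← mul_sum,
      sum_mulVec_of_mem_colStochastic hP]
  have hnorm : ∑ i, |x i| ≤ γ * ∑ i, |x i| + ∑ i, b i :=
    calc ∑ i, |x i| ≤ ∑ i, (|(γ • P *ᵥ x) i| + |b i|) := by
          conv_lhs => rw [hx]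
          exact sum_le_sum fun i _ => abs_add_le _ _
      _ = ∑ i, |(γ • P *ᵥ x) i| + ∑ i, b i := by
          rw [sum_add_distrib]; simp only [abs_of_nonneg (hb _)]
      _ ≤ γ * ∑ i, |x i| + ∑ i, b i := by
          gcongr ?_ + _
          exact (sum_abs_smul_mulVec_le_of_mem_colStochastic hP x).trans_eq
            (by rw [abs_of_nonneg hγ0])
  have hgap : ∑ i, (|x i| - x i) = 0 := by
    refine le_antisymm ?_ (sum_nonneg fun i _ => sub_nonneg.2 (le_abs_self _))
    rw [sum_sub_distrib]
    nlinarith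
  rw [sum_eq_zero_iff_of_nonneg fun i _ => sub_nonneg.2 (le_abs_self _)] at hgap
  exact fun i => abs_eq_self.1 (sub_eq_zero.1 (hgap i (mem_univ i)))

theorem sum_abs_sub_le_of_eq_smul_mulVec_add (hP : P ∈ colStochastic ℝ n) (hγ0 : 0 ≤ γ)
    (hγ1 : γ < 1) {P' : Matrix n n ℝ} {x y b : n → ℝ} (hx : x = γ • P *ᵥ x + b)
    (hy : y = γ • P' *ᵥ y + b) :
    ∑ i, |x i - y i| ≤ γ / (1 - γ) * ∑ i, |((P - P') *ᵥ y) i| := by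
  have herr : x - y = γ • P *ᵥ (x - y) + γ • (P - P') *ᵥ y := by
    rw [sub_mulVec, mulVec_sub]
    conv_lhs => rw [hx, hy]
    module
  have hrec : ∑ i, |x i - y i| ≤ γ * ∑ i, |x i - y i| + γ * ∑ i, |((P - P') *ᵥ y) i| :=
    calc ∑ i, |x i - y i|
        ≤ ∑ i, (|(γ • P *ᵥ (x - y)) i| + |(γ • (P - P') *ᵥ y) i|) := by
          refine sum_le_sum fun i _ => ?_
          rw [show x i - y i = _ from congrFun herr i]
          exact abs_add_le _ _
      _ = ∑ i, |(γ • P *ᵥ (x - y)) i| + γ * ∑ i, |((P - P') *ᵥ y) i| := by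
          simp only [sum_add_distrib, Pi.smul_apply, smul_eq_mul, abs_mul, abs_of_nonneg hγ0,
            ← mul_sum]
      _ ≤ γ * ∑ i, |x i - y i| + γ * ∑ i, |((P - P') *ᵥ y) i| := by
          gcongr ?_ + _
          exact (sum_abs_smul_mulVec_le_of_mem_colStochastic hP (x - y)).trans_eq
            (by rw [abs_of_nonneg hγ0]; rfl)
  rw [div_mul_eq_mul_div, le_div_iff₀ (by linarith)]
  linarith

end ColStochastic

theorem discounted_distribution_policy_bound_general
    {n k : ℕ} (μ : Fin n → ℝ)
    (hμnonneg : ∀ i, 0 ≤ μ i)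
    (P P' : Matrix (Fin n) (Fin n) ℝ)
    (hPnonneg : ∀ i j, 0 ≤ P i j) (hPcol : ∀ j, ∑ i, P i j = 1)
    (hP'nonneg : ∀ i j, 0 ≤ P' i j) (hP'col : ∀ j, ∑ i, P' i j = 1)
    (T : Fin n → Matrix (Fin n) (Fin k) ℝ)
    (hTnonneg : ∀ s i a, 0 ≤ T s i a) (hTcol : ∀ s a, ∑ i, T s i a = 1)
    (π π' : Fin n → Fin k → ℝ)
    (hP : ∀ s i, P i s = ∑ a, T s i a * π s a)
    (hP' : ∀ s i, P' i s = ∑ a, T s i a * π' s a)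
    (γ : ℝ) (hγ0 : 0 ≤ γ) (hγ1 : γ < 1)
    (d d' : Fin n → ℝ)
    (hd : d = (1 - γ) • (1 - γ • P)⁻¹.mulVec μ)
    (hd' : d' = (1 - γ) • (1 - γ • P')⁻¹.mulVec μ) :
    ∑ i, |d i - d' i| ≤ (γ / (1 - γ)) * ∑ s, d' s * ∑ a, |π s a - π' s a| := by
  have hPs : P ∈ colStochastic ℝ (Fin n) := mem_colStochastic_iff_sum.2 ⟨hPnonneg, hPcol⟩
  have hP's : P' ∈ colStochastic ℝ (Fin n) := mem_colStochastic_iff_sum.2 ⟨hP'nonneg, hP'col⟩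
  have hγ : |γ| < 1 := abs_lt.2 ⟨by linarith, hγ1⟩
  have hdfix := eq_smul_mulVec_add_of_eq_smul_inv_mulVec
    (isUnit_det_one_sub_smul_of_mem_colStochastic hPs hγ) hd
  have hd'fix := eq_smul_mulVec_add_of_eq_smul_inv_mulVec
    (isUnit_det_one_sub_smul_of_mem_colStochastic hP's hγ) hd'
  have hd'nonneg := nonneg_of_eq_smul_mulVec_add hP's hγ0 hγ1
    (fun i => mul_nonneg (by linarith) (hμnonneg i)) hd'fix
  have hcol (s : Fin n) : ∑ i, |(P - P') i s| ≤ ∑ a, |π s a - π' s a| := by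
    have hcolumn (i : Fin n) : (P - P') i s = (T s *ᵥ (π s - π' s)) i := by
      simp [hP, hP', mulVec, dotProduct, mul_sub]
    simpa only [hcolumn, Pi.sub_apply] using sum_abs_mulVec_le_of_nonneg_of_sum_le_one (hTnonneg s)
      (fun a => (hTcol s a).le) (π s - π' s)
  have hratio : 0 ≤ γ / (1 - γ) := div_nonneg hγ0 (by linarith)
  calc ∑ i, |d i - d' i| ≤ γ / (1 - γ) * ∑ i, |((P - P') *ᵥ d') i| :=
        sum_abs_sub_le_of_eq_smul_mulVec_add hPs hγ0 hγ1 hdfix hd'fix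
    _ ≤ γ / (1 - γ) * ∑ s, |d' s| * ∑ i, |(P - P') i s| :=
        mul_le_mul_of_nonneg_left (sum_abs_mulVec_le _ _) hratio
    _ = γ / (1 - γ) * ∑ s, d' s * ∑ i, |(P - P') i s| := by
        simp only [abs_of_nonneg (hd'nonneg _)]
    _ ≤ γ / (1 - γ) * ∑ s, d' s * ∑ a, |π s a - π' s a| := by
        gcongr with s
        exacts [hd'nonneg s, hcol s]

theorem discounted_distribution_policy_bound
    {n k : ℕ} (μ : Fin n → ℝ)
    (hμnonneg : ∀ i, 0 ≤ μ i) (hμsum : ∑ i, μ i = 1)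
    (P P' : Matrix (Fin n) (Fin n) ℝ)
    (hPnonneg : ∀ i j, 0 ≤ P i j) (hPcol : ∀ j, ∑ i, P i j = 1)
    (hP'nonneg : ∀ i j, 0 ≤ P' i j) (hP'col : ∀ j, ∑ i, P' i j = 1)
    (T : Fin n → Matrix (Fin n) (Fin k) ℝ)
    (hTnonneg : ∀ s i a, 0 ≤ T s i a) (hTcol : ∀ s a, ∑ i, T s i a = 1)
    (π π' : Fin n → Fin k → ℝ)
    (hπnonneg : ∀ s a, 0 ≤ π s a) (hπsum : ∀ s, ∑ a, π s a = 1)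
    (hπ'nonneg : ∀ s a, 0 ≤ π' s a) (hπ'sum : ∀ s, ∑ a, π' s a = 1)
    (hP : ∀ s i, P i s = ∑ a, T s i a * π s a)
    (hP' : ∀ s i, P' i s = ∑ a, T s i a * π' s a)
    (γ : ℝ) (hγ0 : 0 ≤ γ) (hγ1 : γ < 1)
    (d d' : Fin n → ℝ)
    (hd : d = (1 - γ) • (1 - γ • P)⁻¹.mulVec μ)
    (hd' : d' = (1 - γ) • (1 - γ • P')⁻¹.mulVec μ) :
    ∑ i, |d i - d' i| ≤ (γ / (1 - γ)) * ∑ s, d' s * ∑ a, |π s a - π' s a| :=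
  discounted_distribution_policy_bound_general μ hμnonneg P P' hPnonneg hPcol hP'nonneg hP'col T
    hTnonneg hTcol π π' hP hP' γ hγ0 hγ1 d d' hd hd'
end

section
/- Let P and Q be n×n row-stochastic real matrices, γ ∈ [0,1), and R ∈ ℝⁿ, and set V_P = (I − γP)^{-1}R and V_Q = (I − γQ)^{-1}R. If |((P − Q)V_Q)_j| ≤ c for all j, then |(V_P)_i − (V_Q)_i| ≤ (γ/(1 − γ))·c for all i. -/
/-!
For a row-stochastic `P` and `0 ≤ γ < 1`, the map `v ↦ (1 - γ P) v` expands sup norms by at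
least the factor `1 - γ`, because `P` is a sup-norm contraction. Hence `1 - γ P` is invertible,
and applying the bound to `V_P - V_Q`, which `1 - γ P` sends to `γ (P - Q) V_Q`, gives the claim.
-/

open Matrix

namespace Matrix

variable {n : Type*} [Fintype n] [DecidableEq n]

theorem one_sub_smul_mulVec_sub_inv_mulVec {α : Type*} [CommRing α] {P Q : Matrix n n α}
    {γ : α} (hP : IsUnit (1 - γ • P).det) (hQ : IsUnit (1 - γ • Q).det) (R : n → α) :
    (1 - γ • P) *ᵥ ((1 - γ • P)⁻¹ *ᵥ R - (1 - γ • Q)⁻¹ *ᵥ R) =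
      γ • (P - Q) *ᵥ ((1 - γ • Q)⁻¹ *ᵥ R) := by
  have hRQ : (1 - γ • Q) *ᵥ ((1 - γ • Q)⁻¹ *ᵥ R) = R := by
    rw [mulVec_mulVec, mul_nonsing_inv _ hQ, one_mulVec]
  conv_lhs => rw [mulVec_sub, mulVec_mulVec, mul_nonsing_inv _ hP, one_mulVec]
  conv_lhs => enter [1]; rw [← hRQ]
  rw [← sub_mulVec, ← smul_mulVec, smul_sub]
  congr 1
  abel

variable {P : Matrix n n ℝ}

theorem norm_mulVec_le_of_mem_rowStochastic (hP : P ∈ rowStochastic ℝ n) (v : n → ℝ) :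
    ‖P *ᵥ v‖ ≤ ‖v‖ := by
  refine (pi_norm_le_iff_of_nonneg (norm_nonneg v)).2 fun i => ?_
  calc ‖(P *ᵥ v) i‖ = ‖∑ j, P i j * v j‖ := rfl
    _ ≤ ∑ j, ‖P i j * v j‖ := norm_sum_le _ _
    _ ≤ ∑ j, P i j * ‖v‖ := by
        gcongr with j
        rw [norm_mul, Real.norm_of_nonneg (nonneg_of_mem_rowStochastic hP)]
        exact mul_le_mul_of_nonneg_left (norm_le_pi_norm v j)
          (nonneg_of_mem_rowStochastic hP)
    _ = ‖v‖ := by rw [← Finset.sum_mul, sum_row_of_mem_rowStochastic hP, one_mul]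

theorem one_sub_mul_norm_le_norm_one_sub_smul_mulVec (hP : P ∈ rowStochastic ℝ n) {γ : ℝ}
    (hγ0 : 0 ≤ γ) (v : n → ℝ) : (1 - γ) * ‖v‖ ≤ ‖(1 - γ • P) *ᵥ v‖ := by
  have hPv : ‖γ • P *ᵥ v‖ ≤ γ * ‖v‖ := by
    rw [norm_smul, Real.norm_of_nonneg hγ0]
    exact mul_le_mul_of_nonneg_left (norm_mulVec_le_of_mem_rowStochastic hP v) hγ0
  have htri : ‖v‖ ≤ ‖(1 - γ • P) *ᵥ v‖ + ‖γ • P *ᵥ v‖ := by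
    rw [sub_mulVec, one_mulVec, smul_mulVec]
    exact norm_le_norm_sub_add v _
  linarith

theorem isUnit_one_sub_smul_of_mem_rowStochastic (hP : P ∈ rowStochastic ℝ n) {γ : ℝ}
    (hγ0 : 0 ≤ γ) (hγ1 : γ < 1) : IsUnit (1 - γ • P) := by
  rw [← mulVec_injective_iff_isUnit]
  intro x y hxy
  have hker : (1 - γ • P) *ᵥ (x - y) = 0 := by rw [mulVec_sub, hxy, sub_self]
  have hbound := one_sub_mul_norm_le_norm_one_sub_smul_mulVec hP hγ0 (x - y)
  rw [hker, norm_zero] at hbound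
  have hnorm : ‖x - y‖ = 0 :=
    le_antisymm (nonpos_of_mul_nonpos_right hbound (by linarith)) (norm_nonneg _)
  exact sub_eq_zero.1 (norm_eq_zero.1 hnorm)

end Matrix

theorem value_function_discrepancy_bound
    {n : ℕ} (P Q : Matrix (Fin n) (Fin n) ℝ)
    (hPnonneg : ∀ i j, 0 ≤ P i j) (hProw : ∀ i, ∑ j, P i j = 1)
    (hQnonneg : ∀ i j, 0 ≤ Q i j) (hQrow : ∀ i, ∑ j, Q i j = 1)
    (γ : ℝ) (hγ0 : 0 ≤ γ) (hγ1 : γ < 1)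
    (R : Fin n → ℝ) (VP VQ : Fin n → ℝ)
    (hVP : VP = (1 - γ • P)⁻¹.mulVec R)
    (hVQ : VQ = (1 - γ • Q)⁻¹.mulVec R)
    (c : ℝ) (hc : ∀ j, |(P - Q).mulVec VQ j| ≤ c) :
    ∀ i, |VP i - VQ i| ≤ (γ / (1 - γ)) * c := by
  intro i
  have hP : P ∈ rowStochastic ℝ (Fin n) := mem_rowStochastic_iff_sum.2 ⟨hPnonneg, hProw⟩
  have hQ : Q ∈ rowStochastic ℝ (Fin n) := mem_rowStochastic_iff_sum.2 ⟨hQnonneg, hQrow⟩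
  have hdiff : (1 - γ • P) *ᵥ (VP - VQ) = γ • (P - Q) *ᵥ VQ := by
    subst hVP hVQ
    exact one_sub_smul_mulVec_sub_inv_mulVec
      ((isUnit_iff_isUnit_det _).1 (isUnit_one_sub_smul_of_mem_rowStochastic hP hγ0 hγ1))
      ((isUnit_iff_isUnit_det _).1 (isUnit_one_sub_smul_of_mem_rowStochastic hQ hγ0 hγ1)) R
  have hPQ : ‖(P - Q) *ᵥ VQ‖ ≤ c :=
    (pi_norm_le_iff_of_nonneg ((abs_nonneg _).trans (hc i))).2 hc
  have hγ : 0 < 1 - γ := sub_pos.2 hγ1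
  calc |VP i - VQ i| ≤ ‖VP - VQ‖ := norm_le_pi_norm (VP - VQ) i
    _ ≤ ‖(1 - γ • P) *ᵥ (VP - VQ)‖ / (1 - γ) := by
        rw [le_div_iff₀ hγ, mul_comm]
        exact one_sub_mul_norm_le_norm_one_sub_smul_mulVec hP hγ0 _
    _ = γ * ‖(P - Q) *ᵥ VQ‖ / (1 - γ) := by rw [hdiff, norm_smul, Real.norm_of_nonneg hγ0]
    _ ≤ γ * c / (1 - γ) := by gcongr
    _ = γ / (1 - γ) * c := by ring
end

section
/- Let S be a type, f, g : S → S two maps, γ ∈ [0,1), and R : S → ℝ with |R(s)| ≤ C for all s and some C ≥ 0. For a map h : S → S define V_h(s) = ∑_{t=0}^∞ γ^t R(h^{∘t}(s)). Then for every s ∈ S, V_f(s) − V_g(s) = γ · ∑_{t=0}^∞ γ^t ( V_g(f(f^{∘t}(s))) − V_g(g(f^{∘t}(s))) ), the series on the right converging absolutely. -/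
/-!
With `u t = γ ^ t V_g(f^[t] s)`, the Bellman equation `V_g x = R x + γ V_g (g x)` at
`x = f^[t] s` rewrites `γ` times the `t`-th term of the right-hand side as
`γ ^ t R(f^[t] s) + (u (t + 1) - u t)`.
The first parts sum to `V_f s`, the differences telescope to `-u 0 = -V_g s`.
Bounded rewards make every series absolutely convergent, with `|V_h| ≤ C / (1 - γ)`.
-/

open Function

theorem Summable.hasSum_sub_succ {G : Type*} [AddCommGroup G] [TopologicalSpace G]
    [IsTopologicalAddGroup G] [T2Space G] {u : ℕ → G} (hu : Summable u) :
    HasSum (fun n => u (n + 1) - u n) (-u 0) := by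
  have hshift : Summable fun n => u (n + 1) := (summable_nat_add_iff 1).2 hu
  convert hshift.hasSum.sub hu.hasSum using 1
  rw [hu.tsum_eq_zero_add]
  abel

section BoundedDiscounted

variable {γ C : ℝ} {a : ℕ → ℝ}

theorem summable_pow_mul_of_abs_le (hγ0 : 0 ≤ γ) (hγ1 : γ < 1) (ha : ∀ t, |a t| ≤ C) :
    Summable fun t => γ ^ t * a t :=
  .of_norm_bounded ((summable_geometric_of_lt_one hγ0 hγ1).mul_right C) fun t => by
    rw [Real.norm_eq_abs, abs_mul, abs_pow, abs_of_nonneg hγ0]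
    exact mul_le_mul_of_nonneg_left (ha t) (pow_nonneg hγ0 t)

theorem abs_tsum_pow_mul_le (hγ0 : 0 ≤ γ) (hγ1 : γ < 1) (ha : ∀ t, |a t| ≤ C) :
    |∑' t, γ ^ t * a t| ≤ C / (1 - γ) := by
  rw [div_eq_inv_mul]
  refine tsum_of_norm_bounded (f := fun t => γ ^ t * a t)
    ((hasSum_geometric_of_lt_one hγ0 hγ1).mul_right C) fun t => ?_
  rw [Real.norm_eq_abs, abs_mul, abs_pow, abs_of_nonneg hγ0]
  exact mul_le_mul_of_nonneg_left (ha t) (pow_nonneg hγ0 t)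

end BoundedDiscounted

noncomputable def discountedValue {S : Type*} (γ : ℝ) (R : S → ℝ) (h : S → S) (s : S) :
    ℝ :=
  ∑' t : ℕ, γ ^ t * R (h^[t] s)

section DiscountedValue

variable {S : Type*} {γ C : ℝ} {R : S → ℝ}

theorem abs_discountedValue_le (hγ0 : 0 ≤ γ) (hγ1 : γ < 1) (hR : ∀ s, |R s| ≤ C)
    (h : S → S) (s : S) : |discountedValue γ R h s| ≤ C / (1 - γ) :=
  abs_tsum_pow_mul_le hγ0 hγ1 fun _ => hR _

theorem discountedValue_eq_add_mul {h : S → S} {s : S}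
    (hsum : Summable fun t : ℕ => γ ^ t * R (h^[t] s)) :
    discountedValue γ R h s = R s + γ * discountedValue γ R h (h s) := by
  simp only [discountedValue, hsum.tsum_eq_zero_add, ← tsum_mul_left, pow_succ,
    iterate_succ_apply]
  simp only [pow_zero, iterate_zero_apply, one_mul, mul_assoc, mul_left_comm γ]

end DiscountedValue

theorem deterministic_value_function_telescoping_general
    {S : Type*} (f g : S → S) (γ : ℝ) (hγ0 : 0 ≤ γ) (hγ1 : γ < 1)
    (R : S → ℝ) (C : ℝ) (hR : ∀ s, |R s| ≤ C)
    (V : (S → S) → S → ℝ)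
    (hV : ∀ (h : S → S) (s : S), V h s = ∑' t : ℕ, γ ^ t * R (h^[t] s)) :
    ∀ s : S,
      Summable (fun t : ℕ =>
        |γ ^ t * (V g (f (f^[t] s)) - V g (g (f^[t] s)))|) ∧
      V f s - V g s
        = γ * ∑' t : ℕ, γ ^ t * (V g (f (f^[t] s)) - V g (g (f^[t] s))) := by
  obtain rfl : V = discountedValue γ R := funext₂ hV
  intro s
  have hbound := abs_discountedValue_le hγ0 hγ1 hR g
  have hsumR (h : S → S) (x : S) : Summable fun t : ℕ => γ ^ t * R (h^[t] x) :=
    summable_pow_mul_of_abs_le hγ0 hγ1 fun _ => hR _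
  set u : ℕ → ℝ := fun t => γ ^ t * discountedValue γ R g (f^[t] s)
  have hu : Summable u := summable_pow_mul_of_abs_le hγ0 hγ1 fun _ => hbound _
  have hdiff : Summable fun t : ℕ =>
      γ ^ t * (discountedValue γ R g (f (f^[t] s)) - discountedValue γ R g (g (f^[t] s))) :=
    summable_pow_mul_of_abs_le hγ0 hγ1 fun _ =>
      (abs_sub _ _).trans (add_le_add (hbound _) (hbound _))
  refine ⟨hdiff.abs, ?_⟩
  have hterm (t : ℕ) :
      γ * (γ ^ t * (discountedValue γ R g (f (f^[t] s)) - discountedValue γ R g (g (f^[t] s))))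
        = γ ^ t * R (f^[t] s) + (u (t + 1) - u t) := by
    simp only [u, iterate_succ_apply', discountedValue_eq_add_mul (hsumR g (f^[t] s)), pow_succ]
    ring
  have hsum := ((hsumR f s).hasSum.add hu.hasSum_sub_succ).congr_fun hterm
  rw [← tsum_mul_left, hsum.tsum_eq]
  simp [u, discountedValue, sub_eq_add_neg]

theorem deterministic_value_function_telescoping
    {S : Type*} (f g : S → S) (γ : ℝ) (hγ0 : 0 ≤ γ) (hγ1 : γ < 1)
    (R : S → ℝ) (C : ℝ) (hC : 0 ≤ C) (hR : ∀ s, |R s| ≤ C)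
    (V : (S → S) → S → ℝ)
    (hV : ∀ (h : S → S) (s : S), V h s = ∑' t : ℕ, γ ^ t * R (h^[t] s)) :
    ∀ s : S,
      Summable (fun t : ℕ =>
        |γ ^ t * (V g (f (f^[t] s)) - V g (g (f^[t] s)))|) ∧
      V f s - V g s
        = γ * ∑' t : ℕ, γ ^ t * (V g (f (f^[t] s)) - V g (g (f^[t] s))) :=
  deterministic_value_function_telescoping_general f g γ hγ0 hγ1 R C hR V hV
end

section
/- Let Θ and 𝕄 be types, V : Θ × 𝕄 → ℝ a surrogate value, V* : Θ → ℝ a true value, D : Θ × 𝕄 → ℝ a penalty, and Feas ⊆ Θ a feasible set. Assume: (i) |V(θ, M) − V*(θ)| ≤ D(θ, M) for all θ ∈ Feas and M ∈ 𝕄; (ii) there exists M* ∈ 𝕄 with D(θ, M*) = 0 for all θ ∈ Feas; (iii) θ_old ∈ Feas; (iv) (θ_new, M_new) ∈ Feas × 𝕄 maximizes the objective V(θ, M) − D(θ, M) over Feas × 𝕄. Then V*(θ_new) ≥ V*(θ_old). -/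
section AbsSub

variable {α : Type*} [AddCommGroup α] [LinearOrder α] [IsOrderedAddMonoid α] {a b c : α}

theorem sub_le_of_abs_sub_le (h : |a - b| ≤ c) : a - c ≤ b :=
  sub_le_comm.1 (abs_sub_le_iff.1 h).1

theorem eq_of_abs_sub_le_zero (h : |a - b| ≤ 0) : a = b :=
  sub_eq_zero.1 (abs_nonpos_iff.1 h)

end AbsSub

theorem monotone_improvement
    {Θ 𝕄 : Type*} (V : Θ → 𝕄 → ℝ) (Vstar : Θ → ℝ) (D : Θ → 𝕄 → ℝ)
    (Feas : Set Θ)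
    (hgap : ∀ θ ∈ Feas, ∀ M : 𝕄, |V θ M - Vstar θ| ≤ D θ M)
    (htrue : ∃ Mstar : 𝕄, ∀ θ ∈ Feas, D θ Mstar = 0)
    (θold θnew : Θ) (Mnew : 𝕄)
    (hθold : θold ∈ Feas) (hθnew : θnew ∈ Feas)
    (hmax : ∀ θ ∈ Feas, ∀ M : 𝕄, V θ M - D θ M ≤ V θnew Mnew - D θnew Mnew) :
    Vstar θold ≤ Vstar θnew := by
  obtain ⟨Mstar, hMstar⟩ := htrue
  have hexact : V θold Mstar = Vstar θold :=
    eq_of_abs_sub_le_zero (hMstar θold hθold ▸ hgap θold hθold Mstar)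
  calc Vstar θold = V θold Mstar - D θold Mstar := by rw [hMstar θold hθold, sub_zero, hexact]
    _ ≤ V θnew Mnew - D θnew Mnew := hmax θold hθold Mstar
    _ ≤ Vstar θnew := sub_le_of_abs_sub_le (hgap θnew hθnew Mnew)
end

section
/- Let n ≥ 1 and Φ : {1,…,n} → ℝ with Φ_i ≥ 0 for all i and ∑_i Φ_i² > 0. Let η : ℝ → ℝ be differentiable at 1 with η(1) = 0. Define C(λ) = √(2(1/λ − 1)² + 1) and F(λ) = C(λ)·√((1/n)·∑_i max(Φ_i − η(λ), 0)²) + η(λ). Then F is differentiable at 1 and F'(1) = η'(1)·(1 − ((1/n)∑_i Φ_i) / √((1/n)∑_i Φ_i²)). -/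
/-!
At `λ = 1` the weight `C` has a critical point with `C 1 = 1`, so the product rule leaves only the
derivative of the square root term. The squared hinge `x ↦ max x 0 ^ 2` is differentiable with
derivative `2 * max x 0`, and since `Φ ≥ 0 = η 1` no sample is clipped at `λ = 1`; the chain rule
through `η` then gives `-(η' 1) · E[Φ] / √E[Φ²]`, to which the outer `+ η` adds `η' 1`.
-/

open Set

lemma hasDerivAt_max_zero_sq (a : ℝ) :
    HasDerivAt (fun x : ℝ => max x 0 ^ 2) (2 * max a 0) a := by
  have hright : 0 ≤ a → HasDerivWithinAt (fun x : ℝ => max x 0 ^ 2) (2 * max a 0) (Ici 0) a := by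
    intro ha
    rw [max_eq_left ha]
    exact (hasDerivAt_pow 2 a).hasDerivWithinAt.congr
      (fun x hx => by simp [max_eq_left (mem_Ici.1 hx)]) (by simp [ha]) |>.congr_deriv (by ring)
  have hleft : a ≤ 0 → HasDerivWithinAt (fun x : ℝ => max x 0 ^ 2) (2 * max a 0) (Iic 0) a := by
    intro ha
    rw [max_eq_right ha, mul_zero]
    exact (hasDerivWithinAt_const a _ 0).congr
      (fun x hx => by simp [max_eq_right (mem_Iic.1 hx)]) (by simp [ha])
  rcases lt_trichotomy a 0 with ha | rfl | ha
  · exact (hleft ha.le).hasDerivAt (Iic_mem_nhds ha)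
  · simpa [Iic_union_Ici] using (hleft le_rfl).union (hright le_rfl)
  · exact (hright ha.le).hasDerivAt (Ici_mem_nhds ha)

lemma hasDerivAt_sum_max_sub_zero_sq {ι : Type*} (s : Finset ι) (Φ : ι → ℝ) (t : ℝ) :
    HasDerivAt (fun u => ∑ i ∈ s, max (Φ i - u) 0 ^ 2) (-2 * ∑ i ∈ s, max (Φ i - t) 0) t := by
  rw [Finset.mul_sum]
  refine HasDerivAt.fun_sum fun i _ => ?_
  simpa [Function.comp_def] using
    (hasDerivAt_max_zero_sq (Φ i - t)).comp t ((hasDerivAt_id t).const_sub (Φ i))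

lemma hasDerivAt_sqrt_two_mul_inv_sub_one_sq_add_one :
    HasDerivAt (fun x : ℝ => √(2 * (1 / x - 1) ^ 2 + 1)) 0 1 := by
  have hinv : HasDerivAt (fun x : ℝ => 1 / x - 1) (-1) 1 := by
    simpa using (hasDerivAt_inv (one_ne_zero (α := ℝ))).sub_const 1
  simpa using (((hinv.fun_pow 2).const_mul 2).add_const 1).sqrt (by norm_num)

theorem dro_dual_deriv_at_full_participation
    (n : ℕ) (hn : 1 ≤ n) (Φ : Fin n → ℝ)
    (hΦnonneg : ∀ i, 0 ≤ Φ i) (hΦpos : 0 < ∑ i, Φ i ^ 2)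
    (η : ℝ → ℝ) (hη : DifferentiableAt ℝ η 1) (hη1 : η 1 = 0)
    (Cfun F : ℝ → ℝ)
    (hC : ∀ lam, Cfun lam = Real.sqrt (2 * (1 / lam - 1) ^ 2 + 1))
    (hF : ∀ lam, F lam
      = Cfun lam * Real.sqrt ((1 / (n : ℝ)) * ∑ i, max (Φ i - η lam) 0 ^ 2)
        + η lam) :
    DifferentiableAt ℝ F 1 ∧
    deriv F 1 = deriv η 1 *
      (1 - ((1 / (n : ℝ)) * ∑ i, Φ i)
        / Real.sqrt ((1 / (n : ℝ)) * ∑ i, Φ i ^ 2)) := by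
  set m₂ : ℝ := (1 / (n : ℝ)) * ∑ i, Φ i ^ 2
  have hm₂ : 0 < m₂ := mul_pos (by positivity) hΦpos
  have hunclipped (i : Fin n) : max (Φ i - η 1) 0 = Φ i := by
    rw [hη1, sub_zero, max_eq_left (hΦnonneg i)]
  have hval : (1 / (n : ℝ)) * ∑ i, max (Φ i - η 1) 0 ^ 2 = m₂ := by simp only [hunclipped, m₂]
  have hS : HasDerivAt (fun lam => (1 / (n : ℝ)) * ∑ i, max (Φ i - η lam) 0 ^ 2)
      ((1 / (n : ℝ)) * (-2 * ∑ i, Φ i) * deriv η 1) 1 := by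
    have h := ((hasDerivAt_sum_max_sub_zero_sq Finset.univ Φ (η 1)).const_mul
      (1 / (n : ℝ))).comp 1 hη.hasDerivAt
    simpa only [hunclipped, Function.comp_def] using h
  have hFd : HasDerivAt F
      (deriv η 1 * (1 - ((1 / (n : ℝ)) * ∑ i, Φ i) / √m₂)) 1 := by
    rw [funext hF, funext hC]
    refine ((hasDerivAt_sqrt_two_mul_inv_sub_one_sq_add_one.fun_mul
      (hS.sqrt (hval ▸ hm₂.ne'))).fun_add hη.hasDerivAt).congr_deriv ?_
    have := Real.sqrt_pos.2 hm₂
    rw [hval]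
    field_simp
    ring
  exact ⟨hFd.differentiableAt, hFd.deriv⟩
end

section
/- Let κ : ℝ → ℝ be differentiable at 1, and let β, σ : ℝ → ℝ be differentiable at κ(1) with β(κ(1)) = 1 and σ(κ(1)) = 1. Define G(λ) = β(κ(λ))·(1 − λ) + σ(κ(λ))·λ. If |σ'(κ(1))·κ'(1)| < 1, then λ = 1 is a locally asymptotically stable fixed point of the difference equation λ_{t+1} = G(λ_t): G(1) = 1 and there exists ε > 0 such that for every λ with |λ − 1| < ε, the iterates G^{∘t}(λ) converge to 1 as t → ∞. -/
/-!
Differentiating `G` at the fixed point `1`, the `β`-term contributes `-β (κ 1) = -1` and the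
`σ`-term `σ (κ 1) + (σ ∘ κ)' 1 = 1 + σ' (κ 1) κ' 1`, so `G' 1 = σ' (κ 1) κ' 1`. Since
`|G' 1| < 1`, choosing `c` with `|G' 1| < c < 1`, the map satisfies `|G x - 1| ≤ c |x - 1|`
near `1`; the iterates then approach `1` at least geometrically with ratio `c`.
-/

open Filter Topology

theorem HasDerivAt.eventually_norm_sub_le {𝕜 F : Type*} [NontriviallyNormedField 𝕜]
    [NormedAddCommGroup F] [NormedSpace 𝕜 F] {f : 𝕜 → F} {f' : F} {a : 𝕜} {c : ℝ}
    (hf : HasDerivAt f f' a) (hc : ‖f'‖ < c) :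
    ∀ᶠ x in 𝓝 a, ‖f x - f a‖ ≤ c * ‖x - a‖ := by
  filter_upwards [(hasDerivAt_iff_isLittleO.mp hf).def (sub_pos.mpr hc)] with x hx
  calc ‖f x - f a‖ ≤ ‖f x - f a - (x - a) • f'‖ + ‖(x - a) • f'‖ := norm_le_norm_sub_add _ _
    _ ≤ (c - ‖f'‖) * ‖x - a‖ + ‖x - a‖ * ‖f'‖ := by rw [norm_smul]; gcongr
    _ = c * ‖x - a‖ := by ring

theorem dist_iterate_le_pow_mul {X : Type*} [PseudoMetricSpace X] {f : X → X} {a x : X}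
    {c ε : ℝ} (hc0 : 0 ≤ c) (hc1 : c ≤ 1)
    (hf : ∀ y, dist y a < ε → dist (f y) a ≤ c * dist y a) (hx : dist x a < ε) (n : ℕ) :
    dist (f^[n] x) a ≤ c ^ n * dist x a := by
  induction n with
  | zero => simp
  | succ n ih =>
    have hn : dist (f^[n] x) a < ε :=
      ih.trans_lt <| (mul_le_of_le_one_left dist_nonneg (pow_le_one₀ hc0 hc1)).trans_lt hx
    rw [Function.iterate_succ_apply']
    calc dist (f (f^[n] x)) a ≤ c * dist (f^[n] x) a := hf _ hn
      _ ≤ c * (c ^ n * dist x a) := by gcongr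
      _ = c ^ (n + 1) * dist x a := by ring

theorem tendsto_iterate_of_dist_le_mul {X : Type*} [PseudoMetricSpace X] {f : X → X}
    {a x : X} {c ε : ℝ} (hc0 : 0 ≤ c) (hc1 : c < 1)
    (hf : ∀ y, dist y a < ε → dist (f y) a ≤ c * dist y a) (hx : dist x a < ε) :
    Tendsto (fun n => f^[n] x) atTop (𝓝 a) := by
  rw [tendsto_iff_dist_tendsto_zero]
  refine squeeze_zero (fun _ => dist_nonneg)
    (dist_iterate_le_pow_mul hc0 hc1.le hf hx) ?_
  simpa using (tendsto_pow_atTop_nhds_zero_of_lt_one hc0 hc1).mul_const (dist x a)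

theorem HasDerivAt.exists_tendsto_iterate_of_norm_lt_one {𝕜 : Type*}
    [NontriviallyNormedField 𝕜] {f : 𝕜 → 𝕜} {f' a : 𝕜} (hf : HasDerivAt f f' a)
    (hfix : f a = a) (hf' : ‖f'‖ < 1) :
    ∃ ε > 0, ∀ x, dist x a < ε → Tendsto (fun n => f^[n] x) atTop (𝓝 a) := by
  obtain ⟨c, hc, hc1⟩ := exists_between hf'
  obtain ⟨ε, hε, hball⟩ := Metric.eventually_nhds_iff.mp (hf.eventually_norm_sub_le hc)
  refine ⟨ε, hε, fun x hx => tendsto_iterate_of_dist_le_mul ((norm_nonneg _).trans hc.le) hc1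
    (fun y hy => ?_) hx⟩
  simpa only [dist_eq_norm, hfix] using hball hy

theorem hasDerivAt_mul_one_sub_add_mul {b s : ℝ → ℝ} {b' s' : ℝ} (hb : HasDerivAt b b' 1)
    (hs : HasDerivAt s s' 1) (hbs : b 1 = s 1) :
    HasDerivAt (fun x => b x * (1 - x) + s x * x) s' 1 := by
  have h := (hb.mul ((hasDerivAt_id 1).const_sub 1)).add (hs.mul (hasDerivAt_id 1))
  refine h.congr_deriv ?_
  simp only [id, hbs]
  ring

theorem fair_equilibrium_stability
    (κ β σ : ℝ → ℝ)
    (hκ : DifferentiableAt ℝ κ 1)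
    (hβ : DifferentiableAt ℝ β (κ 1)) (hσ : DifferentiableAt ℝ σ (κ 1))
    (hβ1 : β (κ 1) = 1) (hσ1 : σ (κ 1) = 1)
    (G : ℝ → ℝ) (hG : ∀ lam, G lam = β (κ lam) * (1 - lam) + σ (κ lam) * lam)
    (hstab : |deriv σ (κ 1) * deriv κ 1| < 1) :
    G 1 = 1 ∧
    ∃ ε > 0, ∀ lam : ℝ, |lam - 1| < ε →
      Filter.Tendsto (fun t : ℕ => G^[t] lam) Filter.atTop (nhds 1) := by
  have hG1 : G 1 = 1 := by simp [hG, hσ1]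
  have hderiv : HasDerivAt G (deriv σ (κ 1) * deriv κ 1) 1 := by
    rw [funext hG]
    exact hasDerivAt_mul_one_sub_add_mul (hβ.hasDerivAt.comp 1 hκ.hasDerivAt)
      (hσ.hasDerivAt.comp 1 hκ.hasDerivAt) (by simp only [hβ1, hσ1])
  obtain ⟨ε, hε, hconv⟩ := hderiv.exists_tendsto_iterate_of_norm_lt_one hG1 hstab
  exact ⟨hG1, ε, hε, fun lam hlam => hconv lam (by rwa [Real.dist_eq])⟩
end
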